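/- arXiv:2602.21187 — 5 statements merged into one kernel-verified Lean document; each statement's English description precedes it below -/
import Mathlib

section
/- Every skew-symmetric linear map F : h₃ → h₃ on the 3-dimensional Heisenberg Lie algebra defines a closed left-invariant 2-form ω_F(U,V) = ⟨FU,V⟩; equivalently, every such F satisfies the cocycle condition ⟨[X,V],FW⟩ + ⟨[V,W],FX⟩ + ⟨[W,X],FV⟩ = 0 for all X,V,W ∈ h₃. -/
/-- The Lie bracket of the 3-dimensional Heisenberg Lie algebra h₃ = ℝ³,
    determined by [e₁,e₂] = e₃. -/
def heisBracket (u v : Fin 3 → ℝ) : Fin 3 → ℝ :=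
  ![0, 0, u 0 * v 1 - u 1 * v 0]

/-- The inner product making e₁, e₂, e₃ orthonormal. -/
def dot3 (u v : Fin 3 → ℝ) : ℝ := ∑ i, u i * v i

/- Every skew-symmetric linear map F : h₃ → h₃ satisfies the cocycle
   (closedness) condition ⟨[X,V],FW⟩ + ⟨[V,W],FX⟩ + ⟨[W,X],FV⟩ = 0,
   i.e. the left-invariant 2-form ω_F(U,V) = ⟨FU,V⟩ is closed. -/
theorem stmt_5 (F : (Fin 3 → ℝ) →ₗ[ℝ] (Fin 3 → ℝ))
    (hskew : ∀ u v, dot3 (F u) v = - dot3 u (F v)) :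
    ∀ X V W : Fin 3 → ℝ,
      dot3 (heisBracket X V) (F W) + dot3 (heisBracket V W) (F X)
        + dot3 (heisBracket W X) (F V) = 0 := by
  intro X V W
  set e₃ : Fin 3 → ℝ := ![0, 0, 1] with he₃
  -- F u 2 expressed via F e₃
  have key : ∀ u : Fin 3 → ℝ,
      F u 2 = -(u 0 * F e₃ 0 + u 1 * F e₃ 1 + u 2 * F e₃ 2) := by
    intro u
    have h := hskew u e₃
    simp [dot3, Fin.sum_univ_three, he₃] at h
    linarith
  have ha2 : F e₃ 2 = 0 := by
    have h := key e₃
    simp [he₃] at h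
    linarith
  simp only [dot3, heisBracket, Fin.sum_univ_three, Matrix.cons_val_zero,
    Matrix.cons_val_one, Matrix.head_cons, Matrix.cons_val_two, Matrix.tail_cons]
  rw [key W, key X, key V, ha2]
  ring
end

section
/- Let F_{U,ρ} denote the skew-symmetric endomorphism of h₃ with matrix [[0,-ρ,-β],[ρ,0,-α],[β,α,0]] in the basis e₁,e₂,e₃, where U = βe₁+αe₂. Under the action (B,r)·F_{U,ρ} = r·det(B)·F_{BU,ρ} of O(2)×ℝ*, if U ≠ 0 then there exist B ∈ SO(2) and r ∈ ℝ* with (B,r)·F_{U,ρ} = F_{e₁, ρ/‖U‖}. -/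
/-!
Rotating `U = (β, α)` by the rotation with `cos θ = β / ‖U‖`, `sin θ = -α / ‖U‖` carries it to
`‖U‖ e₁`. Since `F_{U,ρ}` is linear in the pair `(U, ρ)`, rescaling by `r = ‖U‖⁻¹` then turns
`F_{‖U‖ e₁, ρ}` into `F_{e₁, ρ / ‖U‖}`.
-/

/-- The Lorentz force F_{U,ρ} on h₃, with U = βe₁ + αe₂ encoded as
    `U = ![β, α]`, given by the matrix [[0,-ρ,-β],[ρ,0,-α],[β,α,0]]. -/
def Fm (U : Fin 2 → ℝ) (ρ : ℝ) : Matrix (Fin 3) (Fin 3) ℝ :=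
  ![![0, -ρ, -(U 0)], ![ρ, 0, -(U 1)], ![U 0, U 1, 0]]

open Matrix

theorem Fm_smul (c : ℝ) (U : Fin 2 → ℝ) (ρ : ℝ) : c • Fm U ρ = Fm (c • U) (c * ρ) := by
  ext i j
  fin_cases i <;> fin_cases j <;> rw [Matrix.smul_apply] <;> simp [Fm]

def rotMatrix (a b : ℝ) : Matrix (Fin 2) (Fin 2) ℝ := !![a, b; -b, a]

theorem rotMatrix_det (a b : ℝ) : (rotMatrix a b).det = a ^ 2 + b ^ 2 := by
  rw [rotMatrix, det_fin_two_of]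
  ring

theorem rotMatrix_transpose_mul_self (a b : ℝ) :
    (rotMatrix a b)ᵀ * rotMatrix a b = (a ^ 2 + b ^ 2) • 1 := by
  ext i j
  fin_cases i <;> fin_cases j <;> simp [rotMatrix, mul_apply, Fin.sum_univ_two] <;> ring

theorem rotMatrix_mulVec (a b x y : ℝ) :
    rotMatrix a b *ᵥ ![x, y] = ![a * x + b * y, a * y - b * x] := by
  rw [rotMatrix, mulVec_fin_two]
  simp only [of_apply, cons_val', cons_val_zero, cons_val_one, cons_val_fin_one, neg_mul,
    vecCons_inj, and_true, true_and]
  ring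

theorem sq_add_sq_pos_of_vec_ne_zero {x y : ℝ} (h : ![x, y] ≠ (0 : Fin 2 → ℝ)) :
    0 < x ^ 2 + y ^ 2 := by
  have hxy : x ≠ 0 ∨ y ≠ 0 := by
    by_contra! hxy
    exact h (by simp [hxy.1, hxy.2])
  rcases hxy with hx | hy
  · positivity
  · positivity

theorem stmt_6 (β α ρ : ℝ) (hU : ![β, α] ≠ (0 : Fin 2 → ℝ)) :
    ∃ B : Matrix (Fin 2) (Fin 2) ℝ, ∃ r : ℝ,
      B.transpose * B = 1 ∧ B.det = 1 ∧ r ≠ 0 ∧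
      (r * B.det) • Fm (B.mulVec ![β, α]) ρ
        = Fm ![1, 0] (ρ / Real.sqrt (β ^ 2 + α ^ 2)) := by
  set n := Real.sqrt (β ^ 2 + α ^ 2)
  have hpos : 0 < β ^ 2 + α ^ 2 := sq_add_sq_pos_of_vec_ne_zero hU
  have hn : n ≠ 0 := (Real.sqrt_pos.mpr hpos).ne'
  have hn_sq : n ^ 2 = β ^ 2 + α ^ 2 := Real.sq_sqrt hpos.le
  have hunit : (β / n) ^ 2 + (α / n) ^ 2 = 1 := by
    field_simp
    linarith
  have hrot : rotMatrix (β / n) (α / n) *ᵥ ![β, α] = ![n, 0] := by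
    rw [rotMatrix_mulVec]
    refine vec2_eq ?_ (by ring)
    field_simp
    linarith
  refine ⟨rotMatrix (β / n) (α / n), n⁻¹, by rw [rotMatrix_transpose_mul_self, hunit, one_smul],
    by rw [rotMatrix_det, hunit], inv_ne_zero hn, ?_⟩
  rw [rotMatrix_det, hunit, mul_one, hrot, Fm_smul]
  congr 1
  · simp [hn]
  · ring
end

section
/- Let P(η) = -(1/4)(η⁴ + 2p₀η² - 8ρη + q₀) as above, and assume x₀ ≠ 0 or (z₀+ρ)(y₀+1) ≠ ρ. Then P has at least two distinct real roots. -/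
/-!
Write `c = z₀ + ρ`. Then `P c = x₀² ≥ 0` and `P' c = 2 (ρ - (y₀ + 1) c)`, so the hypothesis says
that either `P c > 0`, or `P c = 0` with `P' c ≠ 0`; in the latter case `c` is not a maximum of `P`.
Either way `P` takes a positive value, and since `P → -∞` at both ends, the intermediate value
theorem gives a root on each side of that point.
-/

open Filter Topology Polynomial

lemma exists_pos_of_hasDerivAt_of_eq_zero {f : ℝ → ℝ} {f' c : ℝ} (hf : HasDerivAt f f' c)
    (hfc : f c = 0) (hf' : f' ≠ 0) : ∃ d, 0 < f d := by
  by_contra! hle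
  have hmax : IsLocalMax f c := Eventually.of_forall fun d => hfc ▸ hle d
  exact hf' (hmax.hasDerivAt_eq_zero hf)

lemma exists_ne_zeros_of_tendsto_atBot {f : ℝ → ℝ} (hf : Continuous f)
    (htop : Tendsto f atTop atBot) (hbot : Tendsto f atBot atBot) {d : ℝ} (hd : 0 < f d) :
    ∃ a b, a ≠ b ∧ f a = 0 ∧ f b = 0 := by
  obtain ⟨l, hl, hld⟩ := ((hbot.eventually_lt_atBot 0).and (eventually_lt_atBot d)).exists
  obtain ⟨r, hr, hdr⟩ := ((htop.eventually_lt_atBot 0).and (eventually_gt_atTop d)).exists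
  obtain ⟨a, ⟨-, had⟩, hfa⟩ := intermediate_value_Ioo hld.le hf.continuousOn ⟨hl, hd⟩
  obtain ⟨b, ⟨hdb, -⟩, hfb⟩ := intermediate_value_Ioo' hdr.le hf.continuousOn ⟨hr, hd⟩
  exact ⟨a, b, (had.trans hdb).ne, hfa, hfb⟩

lemma tendsto_quartic_atTop (a b c : ℝ) :
    Tendsto (fun t : ℝ => t ^ 4 + a * t ^ 2 + b * t + c) atTop atTop := by
  have hdeg : (X ^ 4 + C a * X ^ 2 + C b * X + C c).natDegree = 4 := by compute_degree!
  have hmonic : (X ^ 4 + C a * X ^ 2 + C b * X + C c).Monic := by monicity!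
  have h := (X ^ 4 + C a * X ^ 2 + C b * X + C c).tendsto_atTop_of_leadingCoeff_nonneg
    (natDegree_pos_iff_degree_pos.mp (by omega)) (hmonic.leadingCoeff ▸ zero_le_one)
  simpa using h

lemma tendsto_quartic_atBot (a b c : ℝ) :
    Tendsto (fun t : ℝ => t ^ 4 + a * t ^ 2 + b * t + c) atBot atTop := by
  convert (tendsto_quartic_atTop a (-b) c).comp tendsto_neg_atBot_atTop using 2 with t
  simp only [Function.comp_apply]
  ring

theorem stmt_12 (x₀ y₀ z₀ ρ : ℝ)
    (hnc : x₀ ≠ 0 ∨ (z₀ + ρ) * (y₀ + 1) ≠ ρ) :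
    let p₀ := 2 * (y₀ + 1) - (z₀ + ρ) ^ 2
    let q₀ := p₀ ^ 2 + 8 * ρ * (z₀ + ρ) - 4 * (x₀ ^ 2 + (y₀ + 1) ^ 2)
    let P : ℝ → ℝ := fun η => -(1 / 4) * (η ^ 4 + 2 * p₀ * η ^ 2 - 8 * ρ * η + q₀)
    ∃ a b : ℝ, a ≠ b ∧ P a = 0 ∧ P b = 0 := by
  intro p₀ q₀ P
  have hP : P = fun η => -(1 / 4) * (η ^ 4 + (2 * p₀) * η ^ 2 + (-8 * ρ) * η + q₀) := by
    funext η; simp only [P]; ring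
  have hPc : P (z₀ + ρ) = x₀ ^ 2 := by simp only [P, q₀, p₀]; ring
  have hP' : HasDerivAt P (2 * (ρ - (y₀ + 1) * (z₀ + ρ))) (z₀ + ρ) := by
    have h := ((((hasDerivAt_pow 4 (z₀ + ρ)).add
      ((hasDerivAt_pow 2 (z₀ + ρ)).const_mul (2 * p₀))).sub
        ((hasDerivAt_id (z₀ + ρ)).const_mul (8 * ρ))).add_const q₀).const_mul (-(1 / 4) : ℝ)
    exact h.congr_deriv (by simp only [p₀]; norm_num; ring)
  obtain ⟨d, hd⟩ : ∃ d, 0 < P d := by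
    rcases eq_or_ne x₀ 0 with hx | hx
    · refine exists_pos_of_hasDerivAt_of_eq_zero hP' (by rw [hPc, hx]; ring) ?_
      have := hnc.resolve_left (not_not.mpr hx)
      contrapose! this
      linarith
    · exact ⟨z₀ + ρ, hPc ▸ by positivity⟩
  rw [hP] at hd ⊢
  have hneg : (-(1 / 4) : ℝ) < 0 := by norm_num
  exact exists_ne_zeros_of_tendsto_atBot (by fun_prop)
    ((tendsto_quartic_atTop _ _ _).const_mul_atTop_of_neg hneg)
    ((tendsto_quartic_atBot _ _ _).const_mul_atTop_of_neg hneg) hd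
end

section
/- Suppose γ(t) = exp(x(t)e₁ + y(t)e₂ + z(t)e₃) solves the magnetic system x'' + (x + z₀ + ρ)(y' + 1) = ρ, y'' - (x + z₀ + ρ)x' = 0, z' + (1/2)(x'y - x(y'+2)) = z₀ with x(0)=y(0)=z(0)=0, x'(0)=x₀, y'(0)=y₀, z'(0)=z₀. Then y'(t) = x(t)²/2 + (z₀+ρ)x(t) + y₀ for all t, and x satisfies the single ODE x'' + (x + z₀+ρ)(x²/2 + (z₀+ρ)x + y₀ + 1) = ρ. -/
open Set

theorem hasDerivAt_sq_div_two_add_mul_add_const {f : ℝ → ℝ} {f' t : ℝ} (hf : HasDerivAt f f' t)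
    (c d : ℝ) : HasDerivAt (fun s => f s ^ 2 / 2 + c * f s + d) ((f t + c) * f') t := by
  refine ((((hf.fun_pow 2).div_const 2).add (hf.const_mul c)).add_const d).congr_deriv ?_
  ring

theorem deriv_eq_of_deriv_deriv_eq_mul_deriv {x y : ℝ → ℝ} {c : ℝ} (hx : Differentiable ℝ x)
    (hy : Differentiable ℝ (deriv y)) (hx0 : x 0 = 0)
    (h : ∀ t, deriv (deriv y) t = (x t + c) * deriv x t) (t : ℝ) :
    deriv y t = x t ^ 2 / 2 + c * x t + deriv y 0 := by
  have hF (s : ℝ) := hasDerivAt_sq_div_two_add_mul_add_const (hx s).hasDerivAt c (deriv y 0)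
  exact isOpen_univ.eqOn_of_deriv_eq isPreconnected_univ hy.differentiableOn
    (fun s _ => (hF s).differentiableAt.differentiableWithinAt)
    (fun s _ => (h s).trans (hF s).deriv.symm) (mem_univ 0) (by simp [hx0]) (mem_univ t)

theorem stmt_14_general (y₀ z₀ ρ : ℝ) (x y : ℝ → ℝ)
    (hx : ContDiff ℝ 2 x) (hy : ContDiff ℝ 2 y)
    (hx0 : x 0 = 0)
    (hy0' : deriv y 0 = y₀)
    (heq1 : ∀ t, deriv (deriv x) t + (x t + z₀ + ρ) * (deriv y t + 1) = ρ)
    (heq2 : ∀ t, deriv (deriv y) t - (x t + z₀ + ρ) * deriv x t = 0) :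
    (∀ t, deriv y t = (x t) ^ 2 / 2 + (z₀ + ρ) * x t + y₀) ∧
    (∀ t, deriv (deriv x) t
      + (x t + z₀ + ρ) * ((x t) ^ 2 / 2 + (z₀ + ρ) * x t + y₀ + 1) = ρ) := by
  have hy' (t : ℝ) : deriv y t = x t ^ 2 / 2 + (z₀ + ρ) * x t + y₀ := by
    rw [← hy0']
    exact deriv_eq_of_deriv_deriv_eq_mul_deriv (hx.differentiable two_ne_zero)
      hy.differentiable_deriv_two hx0 (fun s => by linarith [heq2 s]) t
  refine ⟨hy', fun t => ?_⟩
  rw [← hy' t]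
  exact heq1 t

theorem stmt_14 (x₀ y₀ z₀ ρ : ℝ) (x y z : ℝ → ℝ)
    (hx : ContDiff ℝ 2 x) (hy : ContDiff ℝ 2 y) (hz : ContDiff ℝ 1 z)
    (hx0 : x 0 = 0) (hy0 : y 0 = 0) (hz0 : z 0 = 0)
    (hx0' : deriv x 0 = x₀) (hy0' : deriv y 0 = y₀) (hz0' : deriv z 0 = z₀)
    (heq1 : ∀ t, deriv (deriv x) t + (x t + z₀ + ρ) * (deriv y t + 1) = ρ)
    (heq2 : ∀ t, deriv (deriv y) t - (x t + z₀ + ρ) * deriv x t = 0)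
    (heq3 : ∀ t, deriv z t + (1 / 2) * (deriv x t * y t - x t * (deriv y t + 2)) = z₀) :
    (∀ t, deriv y t = (x t) ^ 2 / 2 + (z₀ + ρ) * x t + y₀) ∧
    (∀ t, deriv (deriv x) t
      + (x t + z₀ + ρ) * ((x t) ^ 2 / 2 + (z₀ + ρ) * x t + y₀ + 1) = ρ) :=
  stmt_14_general y₀ z₀ ρ x y hx hy hx0 hy0' heq1 heq2
end

section
/- Conversely, given a smooth solution x of x''(t) + (x(t)+z₀+ρ)(x(t)²/2 + (z₀+ρ)x(t) + y₀ + 1) = ρ with x(0)=0, x'(0)=x₀, define y(t) = ∫₀ᵗ (x(s)²/2 + (z₀+ρ)x(s) + y₀) ds and z(t) = -(1/2)x(t)y(t) - (z₀+ρ)y(t) - x'(t) + x₀. Then (x,y,z) satisfies the full magnetic system x'' + (x+z₀+ρ)(y'+1) = ρ, y'' - (x+z₀+ρ)x' = 0, z' + (1/2)(x'y - x(y'+2)) = z₀ with the initial conditions x(0)=y(0)=z(0)=0, x'(0)=x₀, y'(0)=y₀, z'(0)=z₀. -/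
/-!
With `q(s) = s²/2 + (z₀ + ρ)s + y₀`, the function `y` is a primitive of `q ∘ x`, so `y' = q ∘ x`;
then the single ODE is literally the first equation of the system, and differentiating
`y' = q ∘ x` gives the second one since `q'(s) = s + z₀ + ρ`. The formula for `z` is chosen so
that, by the product rule, the third equation is equivalent to the first for any differentiable `y`.
-/

lemma hasDerivAt_of_eq_primitive {f y : ℝ → ℝ} (hf : Continuous f)
    (hy : ∀ t, y t = ∫ s in (0 : ℝ)..t, f s) (t : ℝ) : HasDerivAt y (f t) t := by
  rw [funext hy]
  exact (hf.integral_hasStrictDerivAt 0 t).hasDerivAt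

lemma HasDerivAt.half_sq_add_mul_add {x : ℝ → ℝ} {x' t : ℝ} (k c : ℝ) (hx : HasDerivAt x x' t) :
    HasDerivAt (fun s => x s ^ 2 / 2 + k * x s + c) ((x t + k) * x') t := by
  refine ((((hx.pow 2).div_const 2).add (hx.const_mul k)).add_const c).congr_deriv ?_
  push_cast
  ring

lemma magnetic_third_eq_of_first {x y z : ℝ → ℝ} {x₀ z₀ ρ t : ℝ}
    (hx : DifferentiableAt ℝ x t) (hx' : DifferentiableAt ℝ (deriv x) t)
    (hy : DifferentiableAt ℝ y t)
    (hz : ∀ t, z t = -(1 / 2) * x t * y t - (z₀ + ρ) * y t - deriv x t + x₀)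
    (hfirst : deriv (deriv x) t + (x t + z₀ + ρ) * (deriv y t + 1) = ρ) :
    deriv z t + (1 / 2) * (deriv x t * y t - x t * (deriv y t + 2)) = z₀ := by
  have hz' : HasDerivAt z (-(1 / 2) * (deriv x t * y t + x t * deriv y t)
      - (z₀ + ρ) * deriv y t - deriv (deriv x) t) t := by
    rw [funext hz]
    refine ((((hx.hasDerivAt.const_mul _).mul hy.hasDerivAt).sub
      (hy.hasDerivAt.const_mul _)).sub hx'.hasDerivAt).add_const x₀ |>.congr_deriv ?_
    ring
  rw [hz'.deriv]
  linear_combination -hfirst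

theorem stmt_15 (x₀ y₀ z₀ ρ : ℝ) (x : ℝ → ℝ) (hx : ContDiff ℝ 2 x)
    (hx0 : x 0 = 0) (hx0' : deriv x 0 = x₀)
    (hode : ∀ t, deriv (deriv x) t
      + (x t + z₀ + ρ) * ((x t) ^ 2 / 2 + (z₀ + ρ) * x t + y₀ + 1) = ρ)
    (y z : ℝ → ℝ)
    (hy : ∀ t, y t = ∫ s in (0 : ℝ)..t, ((x s) ^ 2 / 2 + (z₀ + ρ) * x s + y₀))
    (hz : ∀ t, z t = -(1 / 2) * x t * y t - (z₀ + ρ) * y t - deriv x t + x₀) :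
    x 0 = 0 ∧ y 0 = 0 ∧ z 0 = 0 ∧
    deriv x 0 = x₀ ∧ deriv y 0 = y₀ ∧ deriv z 0 = z₀ ∧
    (∀ t, deriv (deriv x) t + (x t + z₀ + ρ) * (deriv y t + 1) = ρ) ∧
    (∀ t, deriv (deriv y) t - (x t + z₀ + ρ) * deriv x t = 0) ∧
    (∀ t, deriv z t + (1 / 2) * (deriv x t * y t - x t * (deriv y t + 2)) = z₀) := by
  have hx1 : Differentiable ℝ x := hx.differentiable (by norm_num)
  have hx2 : Differentiable ℝ (deriv x) := hx.differentiable_deriv_two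
  have hyq : ∀ t, HasDerivAt y (x t ^ 2 / 2 + (z₀ + ρ) * x t + y₀) t :=
    hasDerivAt_of_eq_primitive (by fun_prop) hy
  have hy' : deriv y = fun t => x t ^ 2 / 2 + (z₀ + ρ) * x t + y₀ := funext fun t => (hyq t).deriv
  have hfirst : ∀ t, deriv (deriv x) t + (x t + z₀ + ρ) * (deriv y t + 1) = ρ := fun t => by
    rw [hy']
    linear_combination hode t
  have hsecond : ∀ t, deriv (deriv y) t - (x t + z₀ + ρ) * deriv x t = 0 := fun t => by
    rw [hy', ((hx1 t).hasDerivAt.half_sq_add_mul_add (z₀ + ρ) y₀).deriv]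
    ring
  have hthird : ∀ t, deriv z t + (1 / 2) * (deriv x t * y t - x t * (deriv y t + 2)) = z₀ :=
    fun t => magnetic_third_eq_of_first (hx1 t) (hx2 t) (hyq t).differentiableAt hz (hfirst t)
  have hy0 : y 0 = 0 := by simp [hy]
  have hy'0 : deriv y 0 = y₀ := by simp [hy', hx0]
  refine ⟨hx0, hy0, ?_, hx0', hy'0, ?_, hfirst, hsecond, hthird⟩
  · rw [hz, hy0, hx0, hx0']
    ring
  · simpa [hy0, hx0] using hthird 0
end
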